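/- Let N, a, b be reals with 0 < a < N, 0 < b < N, and let g be the 2×2 mutual-information function g(x) = (1/N)[x·log(Nx/(ab)) + (a−x)·log(N(a−x)/(a(N−b))) + (b−x)·log(N(b−x)/((N−a)b)) + (N−b−a+x)·log(N(N−b−a+x)/((N−a)(N−b)))] defined for max(0, a+b−N) < x < min(a,b). Then g'(x) > 0 if and only if x > ab/N, and g'(x) < 0 if and only if x < ab/N. Consequently, g is strictly decreasing on (max(0, a+b−N), ab/N] and strictly increasing on [ab/N, min(a,b)). -/

import Mathlib

lemma hd_aux (N D : ℝ) (p : ℝ → ℝ) (p' x : ℝ) (hp : HasDerivAt p p' x)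
    (hN : N ≠ 0) (hD : D ≠ 0) (hpx : p x ≠ 0) :
    HasDerivAt (fun y => p y * Real.log (N * p y / D))
      (p' * (Real.log (N * p x / D) + 1)) x := by
  have h1 : HasDerivAt (fun y => N * p y / D) (N * p' / D) x := (hp.const_mul N).div_const D
  have h2 := h1.log (div_ne_zero (mul_ne_zero hN hpx) hD)
  have h3 := hp.mul h2
  refine h3.congr_deriv ?_
  field_simp

theorem g_monotone (N a b : ℝ) (ha : 0 < a) (haN : a < N) (hb : 0 < b) (hbN : b < N)
    (g : ℝ → ℝ)
    (hg : ∀ x, g x = (1/N) * (x*Real.log (N*x/(a*b)) + (a-x)*Real.log (N*(a-x)/(a*(N-b))) + (b-x)*Real.log (N*(b-x)/((N-a)*b)) + (N-b-a+x)*Real.log (N*(N-b-a+x)/((N-a)*(N-b))))) :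
    (∀ x, max 0 (a + b - N) < x → x < min a b →
      ((0 < deriv g x ↔ a*b/N < x) ∧ (deriv g x < 0 ↔ x < a*b/N))) ∧
    StrictAntiOn g (Set.Ioc (max 0 (a + b - N)) (a*b/N)) ∧
    StrictMonoOn g (Set.Ico (a*b/N) (min a b)) := by
  have hN : (0:ℝ) < N := ha.trans haN
  have hNa : 0 < N - a := sub_pos.mpr haN
  have hNb : 0 < N - b := sub_pos.mpr hbN
  have hgf : g = fun x => (1/N) * (x*Real.log (N*x/(a*b)) + (a-x)*Real.log (N*(a-x)/(a*(N-b))) + (b-x)*Real.log (N*(b-x)/((N-a)*b)) + (N-b-a+x)*Real.log (N*(N-b-a+x)/((N-a)*(N-b)))) := funext hg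
  -- derivative formula
  have key : ∀ x, max 0 (a + b - N) < x → x < min a b →
      HasDerivAt g ((1/N) * Real.log (x*(N-b-a+x)/((a-x)*(b-x)))) x := by
    intro x hxl hxr
    have hx0 : 0 < x := lt_of_le_of_lt (le_max_left _ _) hxl
    have hxa : x < a := lt_of_lt_of_le hxr (min_le_left _ _)
    have hxb : x < b := lt_of_lt_of_le hxr (min_le_right _ _)
    have hax : 0 < a - x := sub_pos.mpr hxa
    have hbx : 0 < b - x := sub_pos.mpr hxb
    have hdx : 0 < N - b - a + x := by
      have := lt_of_le_of_lt (le_max_right 0 (a+b-N)) hxl; linarith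
    have h1 := hd_aux N (a*b) (fun y => y) 1 x (hasDerivAt_id x) hN.ne' (mul_pos ha hb).ne' hx0.ne'
    have h2 := hd_aux N (a*(N-b)) (fun y => a - y) (-1) x ((hasDerivAt_id x).const_sub a)
      hN.ne' (mul_pos ha hNb).ne' hax.ne'
    have h3 := hd_aux N ((N-a)*b) (fun y => b - y) (-1) x ((hasDerivAt_id x).const_sub b)
      hN.ne' (mul_pos hNa hb).ne' hbx.ne'
    have h4 := hd_aux N ((N-a)*(N-b)) (fun y => N - b - a + y) 1 x ((hasDerivAt_id x).const_add (N-b-a))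
      hN.ne' (mul_pos hNa hNb).ne' hdx.ne'
    have hsum := (((h1.add h2).add h3).add h4).const_mul (1/N)
    rw [hgf]
    refine hsum.congr_deriv ?_
    have L : ∀ u v : ℝ, 0 < u → 0 < v → Real.log (u*v) = Real.log u + Real.log v :=
      fun u v hu hv => Real.log_mul hu.ne' hv.ne'
    have D : ∀ u v : ℝ, 0 < u → 0 < v → Real.log (u/v) = Real.log u - Real.log v :=
      fun u v hu hv => Real.log_div hu.ne' hv.ne'
    rw [D (x*(N-b-a+x)) ((a-x)*(b-x)) (mul_pos hx0 hdx) (mul_pos hax hbx),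
        L x (N-b-a+x) hx0 hdx, L (a-x) (b-x) hax hbx,
        D (N*x) (a*b) (mul_pos hN hx0) (mul_pos ha hb), L N x hN hx0, L a b ha hb,
        D (N*(a-x)) (a*(N-b)) (mul_pos hN hax) (mul_pos ha hNb), L N (a-x) hN hax, L a (N-b) ha hNb,
        D (N*(b-x)) ((N-a)*b) (mul_pos hN hbx) (mul_pos hNa hb), L N (b-x) hN hbx, L (N-a) b hNa hb,
        D (N*(N-b-a+x)) ((N-a)*(N-b)) (mul_pos hN hdx) (mul_pos hNa hNb), L N (N-b-a+x) hN hdx,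
        L (N-a) (N-b) hNa hNb]
    ring
  -- sign of deriv
  have hsign : ∀ x, max 0 (a + b - N) < x → x < min a b →
      ((0 < deriv g x ↔ a*b/N < x) ∧ (deriv g x < 0 ↔ x < a*b/N)) := by
    intro x hxl hxr
    have hx0 : 0 < x := lt_of_le_of_lt (le_max_left _ _) hxl
    have hxa : x < a := lt_of_lt_of_le hxr (min_le_left _ _)
    have hxb : x < b := lt_of_lt_of_le hxr (min_le_right _ _)
    have hax : 0 < a - x := sub_pos.mpr hxa
    have hbx : 0 < b - x := sub_pos.mpr hxb
    have hdx : 0 < N - b - a + x := by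
      have := lt_of_le_of_lt (le_max_right 0 (a+b-N)) hxl; linarith
    have hder : deriv g x = (1/N) * Real.log (x*(N-b-a+x)/((a-x)*(b-x))) :=
      (key x hxl hxr).deriv
    have hRpos : 0 < x*(N-b-a+x)/((a-x)*(b-x)) :=
      div_pos (mul_pos hx0 hdx) (mul_pos hax hbx)
    have hgt : 1 < x*(N-b-a+x)/((a-x)*(b-x)) ↔ a*b/N < x := by
      rw [one_lt_div (mul_pos hax hbx), div_lt_iff₀ hN]
      constructor <;> intro h <;> nlinarith
    have hlt : x*(N-b-a+x)/((a-x)*(b-x)) < 1 ↔ x < a*b/N := by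
      rw [div_lt_one (mul_pos hax hbx), lt_div_iff₀ hN]
      constructor <;> intro h <;> nlinarith
    constructor
    · rw [hder, ← hgt]
      constructor
      · intro h
        by_contra hc
        push_neg at hc
        have : Real.log (x*(N-b-a+x)/((a-x)*(b-x))) ≤ 0 := Real.log_nonpos hRpos.le hc
        nlinarith [one_div_pos.mpr hN]
      · intro h
        exact mul_pos (one_div_pos.mpr hN) (Real.log_pos h)
    · rw [hder, ← hlt]
      constructor
      · intro h
        by_contra hc
        push_neg at hc
        have : 0 ≤ Real.log (x*(N-b-a+x)/((a-x)*(b-x))) := Real.log_nonneg hc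
        nlinarith [one_div_pos.mpr hN]
      · intro h
        have := Real.log_neg hRpos h
        nlinarith [one_div_pos.mpr hN]
  have habN1 : max 0 (a + b - N) < a*b/N := by
    rw [max_lt_iff]
    constructor
    · positivity
    · rw [lt_div_iff₀ hN]; nlinarith
  have habN2 : a*b/N < min a b := by
    rw [lt_min_iff, div_lt_iff₀ hN, div_lt_iff₀ hN]
    constructor <;> nlinarith
  refine ⟨hsign, ?_, ?_⟩
  · apply strictAntiOn_of_deriv_neg (convex_Ioc _ _)
    · intro x hx
      exact (key x hx.1 (lt_of_le_of_lt hx.2 habN2)).continuousAt.continuousWithinAt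
    · intro x hx
      rw [interior_Ioc] at hx
      exact ((hsign x hx.1 (hx.2.trans habN2)).2).mpr hx.2
  · apply strictMonoOn_of_deriv_pos (convex_Ico _ _)
    · intro x hx
      exact (key x (lt_of_lt_of_le habN1 hx.1) hx.2).continuousAt.continuousWithinAt
    · intro x hx
      rw [interior_Ico] at hx
      exact ((hsign x (habN1.trans hx.1) hx.2).1).mpr hx.1
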